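/- arXiv:2203.14830 — 2 statements merged into one kernel-verified Lean document; each statement's English description precedes it below -/
import Mathlib

section
/- For every a ∈ ℝ and every x ∈ ℝ the limit Φ_a(x) = lim_{R→+∞} (1/(2π)) ∫_{−R}^{R} e^{i(ξ³ − aξ² + xξ)} dξ exists, and it equals (1/(2π)) [ ∫₀^{+∞} e^{−r³ + (√3/2) a r² − x r/2} e^{i( −a r²/2 + (√3/2) x r + π/6 )} dr + ∫₀^{+∞} e^{−r³ − (√3/2) a r² − x r/2} e^{i( −a r²/2 − (√3/2) x r − π/6 )} dr ], where both integrals converge absolutely. -/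
open MeasureTheory Set Filter

noncomputable section

/-- The first integrand in the explicit representation of `Φ_a(x)`. -/
def airyInt₁ (a x r : ℝ) : ℂ :=
  Complex.exp ((-r ^ 3 + Real.sqrt 3 / 2 * a * r ^ 2 - x * r / 2 : ℝ) : ℂ)
    * Complex.exp (Complex.I *
        ((-(a * r ^ 2) / 2 + Real.sqrt 3 / 2 * x * r + Real.pi / 6 : ℝ) : ℂ))

/-- The second integrand in the explicit representation of `Φ_a(x)`. -/
def airyInt₂ (a x r : ℝ) : ℂ :=
  Complex.exp ((-r ^ 3 - Real.sqrt 3 / 2 * a * r ^ 2 - x * r / 2 : ℝ) : ℂ)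
    * Complex.exp (Complex.I *
        ((-(a * r ^ 2) / 2 - Real.sqrt 3 / 2 * x * r - Real.pi / 6 : ℝ) : ℂ))

namespace AiryAux
open Complex FormalMultilinearSeries


lemma exists_primitive {g : ℂ → ℂ} (hg : Differentiable ℂ g) :
    ∃ G : ℂ → ℂ, ∀ z, HasDerivAt G (g z) z := by
  set c : ℕ → ℂ := fun n => (Nat.factorial n : ℂ)⁻¹ * iteratedDeriv n g 0 with hc
  have hsum : ∀ z : ℂ, HasSum (fun n => c n * z ^ n) (g z) := by
    intro z
    have := Complex.hasSum_taylorSeries_of_entire hg 0 z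
    simpa [hc, smul_eq_mul, mul_comm, mul_assoc, mul_left_comm] using this
  set d : ℕ → ℂ := fun n => Nat.rec 0 (fun m _ => c m / (m + 1)) n with hd
  set q : FormalMultilinearSeries ℂ ℂ ℂ := ofScalars ℂ d with hqdef
  have hqnorm : ∀ n, ‖q n‖ = ‖d n‖ := fun n => ofScalars_norm (E := ℂ) d n
  have hrad : q.radius = ⊤ := by
    apply radius_eq_top_of_summable_norm
    intro r
    have hbd : ∃ C : ℝ, ∀ n, ‖c n‖ * (2 * r + 1) ^ n ≤ C := by
      obtain ⟨C, hC⟩ := (hsum ((2 * r + 1 : ℝ) : ℂ)).summable.tendsto_atTop_zero.norm.bddAbove_range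
      refine ⟨C, fun n => ?_⟩
      have := hC (Set.mem_range_self (f := fun n => ‖c n * ((2 * r + 1 : ℝ):ℂ) ^ n‖) n)
      rw [norm_mul, norm_pow, Complex.norm_real, Real.norm_of_nonneg (by positivity)] at this
      exact this
    obtain ⟨C, hC⟩ := hbd
    have hCnn : 0 ≤ C := le_trans (by positivity) (hC 0)
    have hmaj : Summable (fun n : ℕ => (2 * (r:ℝ) * C) * (1/2) ^ n) :=
      (summable_geometric_of_lt_one (by norm_num) (by norm_num)).mul_left _
    refine Summable.of_nonneg_of_le (fun n => by positivity) (fun n => ?_) hmaj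
    rw [hqnorm]
    match n with
    | 0 => simp [hd]; positivity
    | (m+1) =>
      have hdval : d (m+1) = c m / (m+1) := rfl
      have h1 : ‖c m / ((m:ℂ)+1)‖ ≤ ‖c m‖ := by
        rw [norm_div]
        apply div_le_self (norm_nonneg _)
        calc (1:ℝ) ≤ (m:ℝ) + 1 := by have := Nat.cast_nonneg (α := ℝ) m; linarith
        _ = ‖((m:ℝ)+1 : ℂ)‖ := by
          rw [show ((m:ℝ)+1 : ℂ) = (((m:ℝ)+1 : ℝ) : ℂ) by push_cast; ring,
            Complex.norm_real, Real.norm_of_nonneg (by positivity)]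
        _ = ‖((m:ℂ)+1)‖ := by norm_cast
      have h2 : ((r:ℝ)) ^ (m+1) ≤ r * ((2*r+1)^m * (1/2)^m) := by
        rw [pow_succ, mul_comm ((r:ℝ)^m) (r:ℝ)]
        apply mul_le_mul_of_nonneg_left _ r.coe_nonneg
        rw [← mul_pow]
        apply pow_le_pow_left₀ r.coe_nonneg
        nlinarith [r.coe_nonneg]
      calc ‖d (m+1)‖ * (r:ℝ)^(m+1) ≤ ‖c m‖ * (r * ((2*r+1)^m * (1/2)^m)) := by
            rw [hdval]; push_cast
            apply mul_le_mul h1 h2 (by positivity) (norm_nonneg _)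
        _ = (r * ((‖c m‖ * (2*r+1)^m) * (1/2)^m)) := by ring
        _ ≤ r * (C * (1/2)^m) := by
            apply mul_le_mul_of_nonneg_left _ r.coe_nonneg
            apply mul_le_mul_of_nonneg_right (hC m) (by positivity)
        _ = (2 * r * C) * (1/2)^(m+1) := by rw [pow_succ]; ring
  have hq : HasFPowerSeriesOnBall q.sum q 0 ⊤ := by
    have := q.hasFPowerSeriesOnBall (by rw [hrad]; exact ENNReal.zero_lt_top)
    rwa [hrad] at this
  set G : ℂ → ℂ := q.sum with hG
  have hfder := hq.fderiv
  have hfapp : ∀ z : ℂ, fderiv ℂ G z z = z * g z := by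
    intro z
    have h2 := hfder.hasSum (y := z) (by simp)
    have h3 := h2.mapL (ContinuousLinearMap.apply ℂ ℂ z)
    simp only [ContinuousLinearMap.apply_apply, zero_add] at h3
    have h4 : ∀ n, (q.derivSeries n (fun _ => z)) z = c n * z ^ (n+1) := by
      intro n
      rw [derivSeries_apply_diag]
      have : q (n+1) (fun _ => z) = d (n+1) • z ^ (n+1) := ofScalars_apply_eq d z (n+1)
      rw [this]
      have hdval : d (n+1) = c n / (n+1) := rfl
      rw [hdval]
      have hne : ((n:ℂ)+1) ≠ 0 := Nat.cast_add_one_ne_zero n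
      simp only [nsmul_eq_mul, smul_eq_mul]; push_cast
      field_simp
    rw [funext h4] at h3
    have h5 : HasSum (fun n => c n * z ^ (n+1)) (z * g z) := by
      have := (hsum z).mul_left z
      rw [show (fun n => c n * z ^ (n+1)) = fun i => z * (c i * z ^ i) by funext n; ring]
      exact this
    exact h3.unique h5
  have hGdiff : ∀ z : ℂ, DifferentiableAt ℂ G z :=
    fun z => (hq.analyticAt_of_mem (by simp)).differentiableAt
  have hderivG : deriv G = g := by
    have hcont : Continuous (deriv G) := by
      have hc1 : Continuous (fderiv ℂ G) := by
        have := hfder.continuousOn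
        rw [show Metric.eball (0:ℂ) ⊤ = Set.univ by ext w; simp] at this
        rwa [continuousOn_univ] at this
      have : deriv G = fun z => (fderiv ℂ G z) 1 := by
        funext z; rw [← fderiv_apply_one_eq_deriv]
      rw [this]
      exact (ContinuousLinearMap.apply ℂ ℂ (1:ℂ)).continuous.comp hc1
    apply Continuous.ext_on (dense_compl_singleton (0:ℂ)) hcont hg.continuous
    intro z hz
    have hz0 : z ≠ 0 := hz
    have := hfapp z
    rw [show fderiv ℂ G z z = z * deriv G z by
      rw [← fderiv_apply_one_eq_deriv]
      have := (fderiv ℂ G z).map_smul z (1:ℂ)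
      simpa [smul_eq_mul] using this] at this
    exact mul_left_cancel₀ hz0 this
  exact ⟨G, fun z => by
    have := (hGdiff z).hasDerivAt
    rwa [hderivG] at this⟩


/-- the entire integrand -/
def gg (a x : ℝ) (z : ℂ) : ℂ :=
  Complex.exp (Complex.I * (z ^ 3 - (a : ℂ) * z ^ 2 + (x : ℂ) * z))

lemma gg_diff (a x : ℝ) : Differentiable ℂ (gg a x) := by
  unfold gg
  apply Differentiable.cexp
  fun_prop

lemma gg_cont (a x : ℝ) : Continuous (gg a x) := (gg_diff a x).continuous

lemma norm_gg (a x : ℝ) (z : ℂ) :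
    ‖gg a x z‖ = Real.exp ((Complex.I * (z ^ 3 - (a : ℂ) * z ^ 2 + (x : ℂ) * z)).re) := by
  rw [gg, Complex.norm_exp]

/-- FTC along a segment, given a global primitive. -/
lemma segment_integral {G : ℂ → ℂ} {g : ℂ → ℂ} (hG : ∀ z, HasDerivAt G (g z) z)
    (hgc : Continuous g) (p q : ℂ) :
    G q - G p = ∫ t in (0:ℝ)..1, (q - p) * g (p + (t : ℂ) * (q - p)) := by
  have h : ∀ t : ℝ, HasDerivAt (fun s : ℝ => G (p + (s : ℂ) * (q - p)))
      ((q - p) * g (p + (t : ℂ) * (q - p))) t := by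
    intro t
    have hin : HasDerivAt (fun w : ℂ => p + w * (q - p)) (q - p) (t : ℂ) := by
      simpa using ((hasDerivAt_id ((t : ℝ) : ℂ)).mul_const (q - p)).const_add p
    have h1 := (hG (p + (t : ℂ) * (q - p))).comp (t : ℂ) hin
    have h1' : HasDerivAt (fun w : ℂ => G (p + w * (q - p)))
        ((q - p) * g (p + (t : ℂ) * (q - p))) (t : ℂ) := by
      simpa [mul_comm, Function.comp_def] using h1
    exact h1'.comp_ofReal
  have hint : IntervalIntegrable (fun t : ℝ => (q - p) * g (p + (t : ℂ) * (q - p)))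
      MeasureTheory.volume 0 1 := by
    apply Continuous.intervalIntegrable
    fun_prop
  have := intervalIntegral.integral_eq_sub_of_hasDerivAt (fun t _ => h t) hint
  rw [this]
  norm_num

/-- Real part estimate on the chords. -/
lemma re_bound (a x R u v : ℝ) (hu : 3/4 ≤ u ^ 2) (huv : u ^ 2 + v ^ 2 ≤ 1) (hv : 0 ≤ v)
    (hR : |a| + |x| + 1 ≤ R) :
    (Complex.I * (((R : ℂ) * ((u : ℂ) + (v : ℂ) * Complex.I)) ^ 3
      - (a : ℂ) * ((R : ℂ) * ((u : ℂ) + (v : ℂ) * Complex.I)) ^ 2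
      + (x : ℂ) * ((R : ℂ) * ((u : ℂ) + (v : ℂ) * Complex.I)))).re
      ≤ -(v * R ^ 2) := by
  have hre : (Complex.I * (((R : ℂ) * ((u : ℂ) + (v : ℂ) * Complex.I)) ^ 3
      - (a : ℂ) * ((R : ℂ) * ((u : ℂ) + (v : ℂ) * Complex.I)) ^ 2
      + (x : ℂ) * ((R : ℂ) * ((u : ℂ) + (v : ℂ) * Complex.I)))).re
      = -(v * (R ^ 3 * (3 * u ^ 2 - v ^ 2) - 2 * a * R ^ 2 * u + x * R)) := by
    simp only [Complex.mul_re, Complex.mul_im, Complex.add_re, Complex.add_im, Complex.sub_re,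
      Complex.sub_im, Complex.I_re, Complex.I_im, Complex.ofReal_re, Complex.ofReal_im,
      pow_succ, pow_zero, Complex.one_re, Complex.one_im, Complex.mul_re, Complex.mul_im]
    ring
  rw [hre]
  have hR1 : 1 ≤ R := by
    have := abs_nonneg a; have := abs_nonneg x; linarith
  have hu2 : u ^ 2 ≤ 1 := by nlinarith [sq_nonneg v]
  have hu1 : |u| ≤ 1 := by nlinarith [_root_.sq_abs u, abs_nonneg u]
  have hau : a * u ≤ |a| := by
    calc a * u ≤ |a * u| := le_abs_self _
      _ = |a| * |u| := abs_mul _ _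
      _ ≤ |a| * 1 := mul_le_mul_of_nonneg_left hu1 (abs_nonneg a)
      _ = |a| := by ring
  have hxR : -( |x| * R) ≤ x * R := by
    have := neg_abs_le x
    nlinarith
  have h2 : 2 ≤ 3 * u ^ 2 - v ^ 2 := by nlinarith
  have hD : R ^ 2 ≤ R ^ 3 * (3 * u ^ 2 - v ^ 2) - 2 * a * R ^ 2 * u + x * R := by
    have h3 : 2 * R ^ 3 ≤ R ^ 3 * (3 * u ^ 2 - v ^ 2) := by nlinarith [pow_pos (by linarith : (0:ℝ) < R) 3]
    have h4 : -2 * |a| * R ^ 2 ≤ -2 * a * R ^ 2 * u := by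
      nlinarith [mul_le_mul_of_nonneg_left hau (by positivity : (0:ℝ) ≤ 2 * R ^ 2)]
    have h5 : (|a| + |x| + 1) * R ^ 2 ≤ R ^ 3 := by nlinarith [sq_nonneg R]
    have hRR : R ≤ R ^ 2 := by nlinarith
    have h6 : |x| * R ≤ |x| * R ^ 2 := mul_le_mul_of_nonneg_left hRR (abs_nonneg x)
    have hxRR : -(|x| * R ^ 2) ≤ x * R := by linarith [hxR, h6]
    linarith [h3, h4, h5, hxRR, mul_nonneg (abs_nonneg x) (sq_nonneg R), sq_nonneg R]
  linarith [mul_le_mul_of_nonneg_left hD hv]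

def ωc : ℂ := ((Real.sqrt 3 : ℝ) : ℂ) / 2 + Complex.I / 2
def ηc : ℂ := ((Real.sqrt 3 : ℝ) : ℂ) / 2 - Complex.I / 2


lemma s3_sq : ((Real.sqrt 3 : ℝ) : ℂ) ^ 2 = 3 := by
  rw [← Complex.ofReal_pow, Real.sq_sqrt (by norm_num : (0:ℝ) ≤ 3)]
  norm_num

lemma s3_le_two : Real.sqrt 3 ≤ 2 := by
  nlinarith [Real.sq_sqrt (by norm_num : (0:ℝ) ≤ 3), Real.sqrt_nonneg 3]

lemma s3_nonneg : 0 ≤ Real.sqrt 3 := Real.sqrt_nonneg 3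

lemma hω2 : ωc ^ 2 = (1 + ((Real.sqrt 3 : ℝ) : ℂ) * Complex.I) / 2 := by
  unfold ωc
  linear_combination (1/4 : ℂ) * s3_sq + (1/4 : ℂ) * Complex.I_sq

lemma hω3 : ωc ^ 3 = Complex.I := by
  unfold ωc
  linear_combination ((((Real.sqrt 3 : ℝ) : ℂ) + 3 * Complex.I)/8) * s3_sq
    + ((3 * ((Real.sqrt 3 : ℝ) : ℂ) + Complex.I)/8) * Complex.I_sq

lemma hη2 : ηc ^ 2 = (1 - ((Real.sqrt 3 : ℝ) : ℂ) * Complex.I) / 2 := by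
  unfold ηc
  linear_combination (1/4 : ℂ) * s3_sq + (1/4 : ℂ) * Complex.I_sq

lemma hη3 : ηc ^ 3 = -Complex.I := by
  unfold ηc
  linear_combination ((((Real.sqrt 3 : ℝ) : ℂ) - 3 * Complex.I)/8) * s3_sq
    + ((3 * ((Real.sqrt 3 : ℝ) : ℂ) - Complex.I)/8) * Complex.I_sq

lemma hωexp : Complex.exp (((Real.pi / 6 : ℝ) : ℂ) * Complex.I) = ωc := by
  rw [Complex.exp_mul_I, ← Complex.ofReal_cos, ← Complex.ofReal_sin,
    Real.cos_pi_div_six, Real.sin_pi_div_six]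
  unfold ωc
  push_cast
  ring

lemma hηexp : Complex.exp (((-(Real.pi / 6) : ℝ) : ℂ) * Complex.I) = ηc := by
  rw [Complex.exp_mul_I, ← Complex.ofReal_cos, ← Complex.ofReal_sin,
    Real.cos_neg, Real.sin_neg, Real.cos_pi_div_six, Real.sin_pi_div_six]
  unfold ηc
  push_cast
  ring

lemma norm_ωc : ‖ωc‖ ≤ 3/2 := by
  unfold ωc
  calc ‖((Real.sqrt 3 : ℝ) : ℂ) / 2 + Complex.I / 2‖
      ≤ ‖((Real.sqrt 3 : ℝ) : ℂ) / 2‖ + ‖Complex.I / 2‖ := norm_add_le _ _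
    _ = Real.sqrt 3 / 2 + 1 / 2 := by
        rw [norm_div, norm_div, Complex.norm_real, Complex.norm_I,
          Real.norm_of_nonneg s3_nonneg]
        norm_num
    _ ≤ 3/2 := by nlinarith [s3_le_two]

lemma norm_ηc : ‖ηc‖ ≤ 3/2 := by
  unfold ηc
  calc ‖((Real.sqrt 3 : ℝ) : ℂ) / 2 - Complex.I / 2‖
      ≤ ‖((Real.sqrt 3 : ℝ) : ℂ) / 2‖ + ‖Complex.I / 2‖ := norm_sub_le _ _
    _ = Real.sqrt 3 / 2 + 1 / 2 := by
        rw [norm_div, norm_div, Complex.norm_real, Complex.norm_I,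
          Real.norm_of_nonneg s3_nonneg]
        norm_num
    _ ≤ 3/2 := by nlinarith [s3_le_two]

lemma exp_integral_le (K : ℝ) (hK : 0 < K) :
    (∫ t in (0:ℝ)..1, Real.exp (-(t * K))) ≤ 1 / K := by
  have hder : ∀ t : ℝ, HasDerivAt (fun t : ℝ => -(Real.exp (-(t * K)) / K))
      (Real.exp (-(t * K))) t := by
    intro t
    have h1 : HasDerivAt (fun t : ℝ => -(t * K)) (-K) t := by
      simpa [Pi.neg_def] using ((hasDerivAt_id t).mul_const K).neg
    have h3 : HasDerivAt (fun t : ℝ => -(Real.exp (-(t * K)) / K)) (-(Real.exp (-(t * K)) * -K / K)) t :=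
      (h1.exp.div_const K).neg
    convert h3 using 1
    field_simp
  rw [intervalIntegral.integral_eq_sub_of_hasDerivAt (fun t _ => hder t)
    (by apply Continuous.intervalIntegrable; fun_prop)]
  have e0 : Real.exp (-(0 * K)) = 1 := by norm_num
  rw [e0]
  have h0 : 0 ≤ Real.exp (-(1 * K)) / K := by positivity
  linarith

/-- chord estimate: if the segment from `p` to `q` lies in the good sector at scale `R`,
then `‖G q - G p‖ ≤ 6 / R`. -/
lemma chord_norm_le (a x R : ℝ) {G : ℂ → ℂ} (hG : ∀ z, HasDerivAt G (gg a x z) z)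
    (p q : ℂ) (hR : |a| + |x| + 1 ≤ R) (hqp : ‖q - p‖ ≤ 3 * R)
    (hgeom : ∀ t : ℝ, t ∈ Icc (0:ℝ) 1 → ∃ u v : ℝ,
      p + (t : ℂ) * (q - p) = (R : ℂ) * ((u : ℂ) + (v : ℂ) * Complex.I) ∧
      3/4 ≤ u ^ 2 ∧ u ^ 2 + v ^ 2 ≤ 1 ∧ 0 ≤ v ∧ t / 2 ≤ v) :
    ‖G q - G p‖ ≤ 6 / R := by
  have hR1 : 1 ≤ R := by
    have := abs_nonneg a; have := abs_nonneg x; linarith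
  have hR0 : 0 < R := by linarith
  have hseg := segment_integral hG (gg_cont a x) p q
  have hpt : ∀ t ∈ Icc (0:ℝ) 1,
      ‖(q - p) * gg a x (p + (t : ℂ) * (q - p))‖ ≤ 3 * R * Real.exp (-(t * (R ^ 2 / 2))) := by
    intro t ht
    obtain ⟨u, v, hz, hu, huv, hv0, hv⟩ := hgeom t ht
    rw [norm_mul, hz, norm_gg]
    have hre := re_bound a x R u v hu huv hv0 hR
    have hexp : Real.exp ((Complex.I * (((R : ℂ) * ((u : ℂ) + (v : ℂ) * Complex.I)) ^ 3
        - (a : ℂ) * ((R : ℂ) * ((u : ℂ) + (v : ℂ) * Complex.I)) ^ 2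
        + (x : ℂ) * ((R : ℂ) * ((u : ℂ) + (v : ℂ) * Complex.I)))).re)
        ≤ Real.exp (-(t * (R ^ 2 / 2))) := by
      apply Real.exp_le_exp.mpr
      have : -(v * R ^ 2) ≤ -(t * (R ^ 2 / 2)) := by nlinarith [sq_nonneg R]
      linarith
    exact mul_le_mul hqp hexp (Real.exp_nonneg _) (by positivity)
  have hK : (0:ℝ) < R ^ 2 / 2 := by positivity
  have hle1 : ‖G q - G p‖ ≤ ∫ t in (0:ℝ)..1, ‖(q - p) * gg a x (p + (t : ℂ) * (q - p))‖ := by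
    rw [hseg]
    exact intervalIntegral.norm_integral_le_integral_norm zero_le_one
  have hint1 : IntervalIntegrable
      (fun t : ℝ => ‖(q - p) * gg a x (p + (t : ℂ) * (q - p))‖) volume 0 1 := by
    apply Continuous.intervalIntegrable
    exact (continuous_const.mul ((gg_cont a x).comp (by fun_prop))).norm
  have hint2 : IntervalIntegrable
      (fun t : ℝ => 3 * R * Real.exp (-(t * (R ^ 2 / 2)))) volume 0 1 := by
    apply Continuous.intervalIntegrable; fun_prop
  have hle2 : (∫ t in (0:ℝ)..1, ‖(q - p) * gg a x (p + (t : ℂ) * (q - p))‖)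
      ≤ ∫ t in (0:ℝ)..1, 3 * R * Real.exp (-(t * (R ^ 2 / 2))) :=
    intervalIntegral.integral_mono_on zero_le_one hint1 hint2 hpt
  have hle3 : (∫ t in (0:ℝ)..1, 3 * R * Real.exp (-(t * (R ^ 2 / 2)))) ≤ 6 / R := by
    rw [intervalIntegral.integral_const_mul]
    have hh := exp_integral_le (R ^ 2 / 2) hK
    have h1 : 3 * R * (∫ t in (0:ℝ)..1, Real.exp (-(t * (R ^ 2 / 2))))
        ≤ 3 * R * (1 / (R ^ 2 / 2)) :=
      mul_le_mul_of_nonneg_left hh (by positivity)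
    have h2 : 3 * R * (1 / (R ^ 2 / 2)) = 6 / R := by
      field_simp
      ring
    linarith
  linarith



section Chords
variable (a x : ℝ) {G : ℂ → ℂ}

lemma geom_aux {t : ℝ} (ht : t ∈ Icc (0:ℝ) 1) :
    3/4 ≤ ((1 - t) + t * (Real.sqrt 3 / 2)) ^ 2 ∧
    ((1 - t) + t * (Real.sqrt 3 / 2)) ^ 2 + (t / 2) ^ 2 ≤ 1 := by
  obtain ⟨ht0, ht1⟩ := ht
  have hs := Real.sq_sqrt (by norm_num : (0:ℝ) ≤ 3)
  have hs2 := s3_le_two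
  have hsn := s3_nonneg
  have hu : Real.sqrt 3 / 2 ≤ (1 - t) + t * (Real.sqrt 3 / 2) := by nlinarith
  constructor
  · nlinarith
  · have key : 0 ≤ (2 - Real.sqrt 3) * (t * (1 - t)) :=
      mul_nonneg (by linarith) (mul_nonneg ht0 (by linarith))
    nlinarith

lemma tendsto_chord_right (hG : ∀ z, HasDerivAt G (gg a x z) z) :
    Tendsto (fun R : ℝ => G ((R : ℂ) * ωc) - G (R : ℂ)) atTop (nhds 0) := by
  apply squeeze_zero_norm' (a := fun R : ℝ => 6 / R)
  · filter_upwards [eventually_ge_atTop (|a| + |x| + 1)] with R hR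
    have hR0 : (0:ℝ) ≤ R := by
      have := abs_nonneg a; have := abs_nonneg x; linarith
    apply chord_norm_le a x R hG (R : ℂ) ((R : ℂ) * ωc) hR
    · have : (R : ℂ) * ωc - (R : ℂ) = (R : ℂ) * (ωc - 1) := by ring
      rw [this, norm_mul, Complex.norm_real, Real.norm_of_nonneg hR0]
      have h1 : ‖ωc - 1‖ ≤ 3 := by
        calc ‖ωc - 1‖ ≤ ‖ωc‖ + ‖(1:ℂ)‖ := norm_sub_le _ _
          _ ≤ 3/2 + 1 := by
              have := norm_ωc; simp only [norm_one]; linarith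
          _ ≤ 3 := by norm_num
      nlinarith [norm_nonneg (ωc - 1)]
    · intro t ht
      refine ⟨(1 - t) + t * (Real.sqrt 3 / 2), t / 2, ?_, (geom_aux ht).1, (geom_aux ht).2,
        by linarith [ht.1], le_refl _⟩
      unfold ωc
      push_cast
      ring
  · exact Tendsto.div_atTop tendsto_const_nhds tendsto_id

lemma tendsto_chord_left (hG : ∀ z, HasDerivAt G (gg a x z) z) :
    Tendsto (fun R : ℝ => G (-(R : ℂ) * ηc) - G ((-R : ℝ) : ℂ)) atTop (nhds 0) := by
  apply squeeze_zero_norm' (a := fun R : ℝ => 6 / R)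
  · filter_upwards [eventually_ge_atTop (|a| + |x| + 1)] with R hR
    have hR0 : (0:ℝ) ≤ R := by
      have := abs_nonneg a; have := abs_nonneg x; linarith
    apply chord_norm_le a x R hG ((-R : ℝ) : ℂ) (-(R : ℂ) * ηc) hR
    · have : -(R : ℂ) * ηc - ((-R : ℝ) : ℂ) = (R : ℂ) * (1 - ηc) := by
        push_cast; ring
      rw [this, norm_mul, Complex.norm_real, Real.norm_of_nonneg hR0]
      have h1 : ‖(1:ℂ) - ηc‖ ≤ 3 := by
        calc ‖(1:ℂ) - ηc‖ ≤ ‖(1:ℂ)‖ + ‖ηc‖ := norm_sub_le _ _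
          _ ≤ 1 + 3/2 := by
              have := norm_ηc; simp only [norm_one]; linarith
          _ ≤ 3 := by norm_num
      nlinarith [norm_nonneg ((1:ℂ) - ηc)]
    · intro t ht
      refine ⟨-((1 - t) + t * (Real.sqrt 3 / 2)), t / 2, ?_, by
          have := (geom_aux ht).1; nlinarith, by
          have := (geom_aux ht).2; nlinarith, by linarith [ht.1], le_refl _⟩
      unfold ηc
      push_cast
      ring
  · exact Tendsto.div_atTop tendsto_const_nhds tendsto_id

end Chords

section Rays
variable (a x : ℝ) {G : ℂ → ℂ}

lemma ω_mul_exp (W : ℂ) :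
    ωc * Complex.exp W = Complex.exp (((Real.pi / 6 : ℝ) : ℂ) * Complex.I + W) := by
  rw [Complex.exp_add, hωexp]

lemma η_mul_exp (W : ℂ) :
    ηc * Complex.exp W = Complex.exp (((-(Real.pi / 6) : ℝ) : ℂ) * Complex.I + W) := by
  rw [Complex.exp_add, hηexp]

lemma ωc_eq : ωc = (((Real.sqrt 3 : ℝ) : ℂ) + Complex.I) / 2 := by unfold ωc; ring

lemma ηc_eq : ηc = (((Real.sqrt 3 : ℝ) : ℂ) - Complex.I) / 2 := by unfold ηc; ring

lemma airy1_eq (r : ℝ) : airyInt₁ a x r = ωc * gg a x ((r : ℂ) * ωc) := by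
  rw [airyInt₁, gg, ω_mul_exp, ← Complex.exp_add]
  congr 1
  rw [mul_pow, mul_pow, hω3, hω2, ωc_eq]
  push_cast
  linear_combination (-(r:ℂ)^3 + ((Real.sqrt 3:ℝ):ℂ) * a * r^2/2 - (x:ℂ)*r/2) * Complex.I_sq

lemma airy2_eq (r : ℝ) : airyInt₂ a x r = ηc * gg a x (-(r : ℂ) * ηc) := by
  rw [airyInt₂, gg, η_mul_exp, ← Complex.exp_add]
  congr 1
  rw [show (-(r:ℂ) * ηc) ^ 3 = -(r:ℂ)^3 * ηc^3 by ring,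
    show (-(r:ℂ) * ηc) ^ 2 = (r:ℂ)^2 * ηc^2 by ring, hη3, hη2, ηc_eq]
  push_cast
  linear_combination (-(r:ℂ)^3 - ((Real.sqrt 3:ℝ):ℂ) * a * r^2/2 - (x:ℂ)*r/2) * Complex.I_sq

lemma airy1_cont : Continuous (fun r : ℝ => airyInt₁ a x r) := by
  unfold airyInt₁; fun_prop

lemma airy2_cont : Continuous (fun r : ℝ => airyInt₂ a x r) := by
  unfold airyInt₂; fun_prop

lemma ray1 (hG : ∀ z, HasDerivAt G (gg a x z) z) (R : ℝ) :
    ∫ r in (0:ℝ)..R, airyInt₁ a x r = G ((R : ℂ) * ωc) - G 0 := by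
  have h : ∀ r : ℝ, HasDerivAt (fun s : ℝ => G ((s : ℂ) * ωc)) (airyInt₁ a x r) r := by
    intro r
    have hin : HasDerivAt (fun w : ℂ => w * ωc) ωc (r : ℂ) := by
      simpa using (hasDerivAt_id ((r:ℝ) : ℂ)).mul_const ωc
    have h1 := (hG ((r : ℂ) * ωc)).comp (r : ℂ) hin
    have h2 : HasDerivAt (fun w : ℂ => G (w * ωc)) (ωc * gg a x ((r:ℂ) * ωc)) (r : ℂ) := by
      simpa [mul_comm, Function.comp_def] using h1
    rw [airy1_eq]
    exact h2.comp_ofReal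
  rw [intervalIntegral.integral_eq_sub_of_hasDerivAt (fun t _ => h t)
    ((airy1_cont a x).intervalIntegrable _ _)]
  norm_num

lemma ray2 (hG : ∀ z, HasDerivAt G (gg a x z) z) (R : ℝ) :
    ∫ r in (0:ℝ)..R, airyInt₂ a x r = G 0 - G (-(R : ℂ) * ηc) := by
  have h : ∀ r : ℝ, HasDerivAt (fun s : ℝ => -G (-(s : ℂ) * ηc)) (airyInt₂ a x r) r := by
    intro r
    have hin : HasDerivAt (fun w : ℂ => -w * ηc) (-ηc) (r : ℂ) := by
      simpa using ((hasDerivAt_id ((r:ℝ) : ℂ)).neg.mul_const ηc)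
    have h1 := (hG (-(r : ℂ) * ηc)).comp (r : ℂ) hin
    have h2 : HasDerivAt (fun w : ℂ => -G (-w * ηc)) (ηc * gg a x (-(r:ℂ) * ηc)) (r : ℂ) := by
      have : HasDerivAt (fun w : ℂ => -G (-w * ηc)) (-(gg a x (-(r:ℂ) * ηc) * -ηc)) (r:ℂ) := h1.neg
      convert this using 1
      ring
    rw [airy2_eq]
    exact h2.comp_ofReal
  rw [intervalIntegral.integral_eq_sub_of_hasDerivAt (fun t _ => h t)
    ((airy2_cont a x).intervalIntegrable _ _)]
  have h0 : ((0:ℝ):ℂ) = 0 := by norm_num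
  rw [show (-(↑(0:ℝ)) * ηc : ℂ) = 0 by norm_num]
  rw [show (-(↑R) * ηc : ℂ) = -(↑R * ηc) by ring]
  ring

lemma realline (hG : ∀ z, HasDerivAt G (gg a x z) z) (R : ℝ) (hR : 0 ≤ R) :
    ∫ ξ in Ioo (-R) R, gg a x (ξ : ℂ) = G ((R : ℝ) : ℂ) - G ((-R : ℝ) : ℂ) := by
  rw [← MeasureTheory.integral_Ioc_eq_integral_Ioo,
    ← intervalIntegral.integral_of_le (by linarith : -R ≤ R)]
  apply intervalIntegral.integral_eq_sub_of_hasDerivAt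
  · intro t _
    exact (hG (t : ℂ)).comp_ofReal
  · exact ((gg_cont a x).comp Complex.continuous_ofReal).intervalIntegrable _ _

end Rays

section Integrability
variable (a x : ℝ)

lemma int_exp_cubic (b c : ℝ) :
    IntegrableOn (fun r : ℝ => Real.exp (-r ^ 3 + b * r ^ 2 + c * r)) (Ioi 0) := by
  apply integrable_of_isBigO_exp_neg (b := 1) one_pos
    (Continuous.continuousOn (by fun_prop))
  rw [Asymptotics.isBigO_iff]
  refine ⟨1, ?_⟩
  filter_upwards [eventually_ge_atTop (max 1 (|b| + |c| + 2))] with r hr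
  have h1 : (1:ℝ) ≤ r := le_trans (le_max_left _ _) hr
  have h2 : |b| + |c| + 2 ≤ r := le_trans (le_max_right _ _) hr
  have hb : b * r ^ 2 ≤ |b| * r ^ 2 :=
    mul_le_mul_of_nonneg_right (le_abs_self b) (sq_nonneg r)
  have hrr : r ≤ r ^ 2 := by nlinarith
  have hc : c * r ≤ |c| * r ^ 2 := by
    calc c * r ≤ |c| * r := mul_le_mul_of_nonneg_right (le_abs_self c) (by linarith)
      _ ≤ |c| * r ^ 2 := mul_le_mul_of_nonneg_left hrr (abs_nonneg c)
  have h5 : (|b| + |c| + 2) * r ^ 2 ≤ r ^ 3 := by nlinarith [sq_nonneg r]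
  have hexp : -r ^ 3 + b * r ^ 2 + c * r ≤ -r := by nlinarith [sq_nonneg r]
  rw [Real.norm_of_nonneg (Real.exp_nonneg _), Real.norm_of_nonneg (Real.exp_nonneg _),
    one_mul]
  apply Real.exp_le_exp.mpr
  linarith

lemma norm_airy1 (r : ℝ) :
    ‖airyInt₁ a x r‖ = Real.exp (-r ^ 3 + Real.sqrt 3 / 2 * a * r ^ 2 - x * r / 2) := by
  rw [airyInt₁, norm_mul, Complex.norm_exp,
    Complex.norm_exp, ← Real.exp_add]
  congr 1
  simp only [Complex.mul_re, Complex.mul_im, Complex.I_re, Complex.I_im, Complex.ofReal_re,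
    Complex.ofReal_im, ← Complex.ofReal_pow]
  ring

lemma norm_airy2 (r : ℝ) :
    ‖airyInt₂ a x r‖ = Real.exp (-r ^ 3 - Real.sqrt 3 / 2 * a * r ^ 2 - x * r / 2) := by
  rw [airyInt₂, norm_mul, Complex.norm_exp,
    Complex.norm_exp, ← Real.exp_add]
  congr 1
  simp only [Complex.mul_re, Complex.mul_im, Complex.I_re, Complex.I_im, Complex.ofReal_re,
    Complex.ofReal_im, ← Complex.ofReal_pow]
  ring

lemma airy1_integrable : IntegrableOn (fun r => airyInt₁ a x r) (Ioi (0:ℝ)) := by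
  apply Integrable.mono' (int_exp_cubic (Real.sqrt 3 / 2 * a) (-x / 2))
    ((airy1_cont a x).aestronglyMeasurable)
  filter_upwards with r
  rw [norm_airy1]
  apply le_of_eq
  congr 1
  ring

lemma airy2_integrable : IntegrableOn (fun r => airyInt₂ a x r) (Ioi (0:ℝ)) := by
  apply Integrable.mono' (int_exp_cubic (-(Real.sqrt 3 / 2 * a)) (-x / 2))
    ((airy2_cont a x).aestronglyMeasurable)
  filter_upwards with r
  rw [norm_airy2]
  apply le_of_eq
  congr 1
  ring

end Integrability
end AiryAux

open AiryAux in
/-- existence of the oscillatory limit defining `Φ_a(x)` and its explicit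
representation by two absolutely convergent integrals. -/
theorem statement12 (a x : ℝ) :
    IntegrableOn (fun r => airyInt₁ a x r) (Ioi (0 : ℝ)) ∧
    IntegrableOn (fun r => airyInt₂ a x r) (Ioi (0 : ℝ)) ∧
    Tendsto (fun R : ℝ =>
        (1 / (2 * (Real.pi : ℂ))) * ∫ ξ in Ioo (-R) R,
          Complex.exp (Complex.I * ((ξ : ℂ) ^ 3 - (a : ℂ) * (ξ : ℂ) ^ 2 + (x : ℂ) * (ξ : ℂ))))
      atTop
      (nhds ((1 / (2 * (Real.pi : ℂ))) *
        ((∫ r in Ioi (0 : ℝ), airyInt₁ a x r) + ∫ r in Ioi (0 : ℝ), airyInt₂ a x r))) := by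
  obtain ⟨G, hG⟩ := exists_primitive (gg_diff a x)
  refine ⟨airy1_integrable a x, airy2_integrable a x, ?_⟩
  have hray1 := MeasureTheory.intervalIntegral_tendsto_integral_Ioi 0
    (airy1_integrable a x) tendsto_id
  have hray2 := MeasureTheory.intervalIntegral_tendsto_integral_Ioi 0
    (airy2_integrable a x) tendsto_id
  have hchordR : Tendsto (fun R : ℝ => G (R : ℂ) - G ((R : ℂ) * ωc)) atTop (nhds 0) := by
    have := (tendsto_chord_right a x hG).neg
    simpa using this
  have hchordL := tendsto_chord_left a x hG
  have hsum : Tendsto (fun R : ℝ =>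
      (G (R : ℂ) - G ((R : ℂ) * ωc)) + (∫ r in (0:ℝ)..R, airyInt₁ a x r)
        + (∫ r in (0:ℝ)..R, airyInt₂ a x r) + (G (-(R : ℂ) * ηc) - G ((-R : ℝ) : ℂ)))
      atTop (nhds (0 + (∫ r in Ioi (0:ℝ), airyInt₁ a x r)
        + (∫ r in Ioi (0:ℝ), airyInt₂ a x r) + 0)) :=
    ((hchordR.add hray1).add hray2).add hchordL
  have key : Tendsto (fun R : ℝ => ∫ ξ in Ioo (-R) R, gg a x (ξ : ℂ)) atTop
      (nhds ((∫ r in Ioi (0:ℝ), airyInt₁ a x r) + ∫ r in Ioi (0:ℝ), airyInt₂ a x r)) := by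
    refine Tendsto.congr' ?_ (by simpa using hsum)
    filter_upwards [eventually_ge_atTop (0:ℝ)] with R hR
    rw [realline a x hG R hR, ray1 a x hG R, ray2 a x hG R]
    push_cast
    ring
  have := key.const_mul (1 / (2 * (Real.pi : ℂ)))
  simpa [gg] using this
end
end

section
/- Let I ⊂ ℝ be an interval and let φ : I → ℂ be such that φ and φ' are locally absolutely continuous on I (so φ is twice differentiable a.e. with φ'' ∈ L¹_loc(I)). Let |φ|' denote the a.e.-defined derivative of |φ| (equal to (φ'\overline{φ} + φ\overline{φ'})/(2|φ|) where φ ≠ 0 and 0 where φ = 0). Then the a.e.-defined function w = |φ|' · φ agrees a.e. on I with a locally absolutely continuous function, whose derivative w' satisfies |w'(x)| ≤ 3|φ'(x)|² + |φ(x)| |φ''(x)| for a.e. x ∈ I. -/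
open MeasureTheory Set Filter

noncomputable section

/-- Absolute continuity of `φ` on the segment `[c,d]`. -/
def ACOn (φ : ℝ → ℂ) (c d : ℝ) : Prop :=
  ∀ ε > (0 : ℝ), ∃ δ > (0 : ℝ), ∀ m : ℕ, ∀ p q : Fin m → ℝ,
    (∀ i, c ≤ p i ∧ p i ≤ q i ∧ q i ≤ d) →
    (∀ i j, i ≠ j → Disjoint (Ioo (p i) (q i)) (Ioo (p j) (q j))) →
    (∑ i, (q i - p i)) < δ → (∑ i, ‖φ (q i) - φ (p i)‖) < ε

/-- Local absolute continuity of `φ` on a set `I`: absolute continuity on every compact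
subsegment of `I`. -/
def LocACOn (φ : ℝ → ℂ) (I : Set ℝ) : Prop :=
  ∀ c d : ℝ, c ≤ d → Icc c d ⊆ I → ACOn φ c d

/-!
Away from the zeros of `φ`, `W = |φ|' φ = (⟪φ, φ'⟫ / |φ|) φ` is a smooth function `G(φ, φ')`
of the pair `(φ, φ')`, and the chain rule gives the bound on `W'`. The map `G` obeys
`|G(z₁, w₁) - G(z₂, w₂)| ≤ 3 |w₁| |z₁ - z₂| + |z₂| |w₁ - w₂|` everywhere, so `W` inherits local
absolute continuity from `φ` and `φ'`. Almost every zero of `φ` is a limit of zeros from the right,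
so `φ'` vanishes there, and then `|W| ≤ |φ| |φ'| = o(t - x)` forces `W' = 0`.
-/

open Topology Asymptotics RealInnerProductSpace

section Pointwise

variable {E : Type*} [NormedAddCommGroup E] [InnerProductSpace ℝ E]

/-- `⟪z, w⟫ / ‖z‖` is the derivative of the norm at `z` in the direction `w`; at `z = 0` the
division by zero makes it `0`, which is the convention `|φ|' = 0` on `{φ = 0}`. -/
def normDerivSMul (z w : E) : E := (⟪z, w⟫ / ‖z‖) • z

@[simp]
lemma normDerivSMul_zero_left (w : E) : normDerivSMul 0 w = 0 := by
  simp [normDerivSMul]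

lemma abs_inner_div_norm_le (z w : E) : |⟪z, w⟫ / ‖z‖| ≤ ‖w‖ := by
  rw [abs_div, abs_norm]
  exact div_le_of_le_mul₀ (norm_nonneg _) (norm_nonneg _)
    ((abs_real_inner_le_norm z w).trans_eq (mul_comm _ _))

lemma abs_inner_div_norm_sub_mul_le (z₁ z₂ w : E) :
    |⟪z₁, w⟫ / ‖z₁‖ - ⟪z₂, w⟫ / ‖z₂‖| * ‖z₂‖ ≤ 2 * ‖w‖ * ‖z₁ - z₂‖ := by
  rcases eq_or_ne z₂ 0 with rfl | h₂
  · simp only [norm_zero, mul_zero]; positivity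
  rcases eq_or_ne z₁ 0 with rfl | h₁
  · simp only [inner_zero_left, norm_zero, div_zero, zero_sub, abs_neg, norm_neg]
    have := mul_le_mul_of_nonneg_right (abs_inner_div_norm_le z₂ w) (norm_nonneg z₂)
    nlinarith [norm_nonneg w, norm_nonneg z₂]
  have hsplit : (⟪z₁, w⟫ / ‖z₁‖ - ⟪z₂, w⟫ / ‖z₂‖) * ‖z₂‖
      = ⟪z₁ - z₂, w⟫ + ⟪z₁, w⟫ / ‖z₁‖ * (‖z₂‖ - ‖z₁‖) := by
    rw [inner_sub_left]
    field_simp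
    ring
  rw [← abs_norm z₂, ← abs_mul, abs_norm, hsplit]
  calc |⟪z₁ - z₂, w⟫ + ⟪z₁, w⟫ / ‖z₁‖ * (‖z₂‖ - ‖z₁‖)|
      ≤ ‖z₁ - z₂‖ * ‖w‖ + ‖w‖ * ‖z₁ - z₂‖ := by
        refine (abs_add_le _ _).trans (add_le_add (abs_real_inner_le_norm _ _) ?_)
        rw [abs_mul]
        exact mul_le_mul (abs_inner_div_norm_le z₁ w)
          ((abs_norm_sub_norm_le z₂ z₁).trans_eq (norm_sub_rev _ _)) (abs_nonneg _) (norm_nonneg _)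
    _ = 2 * ‖w‖ * ‖z₁ - z₂‖ := by ring

lemma norm_normDerivSMul_le (z w : E) : ‖normDerivSMul z w‖ ≤ ‖z‖ * ‖w‖ := by
  rw [normDerivSMul, norm_smul, Real.norm_eq_abs, mul_comm]
  exact mul_le_mul_of_nonneg_left (abs_inner_div_norm_le z w) (norm_nonneg z)

lemma normDerivSMul_sub_right (z w₁ w₂ : E) :
    normDerivSMul z w₁ - normDerivSMul z w₂ = normDerivSMul z (w₁ - w₂) := by
  simp only [normDerivSMul, inner_sub_right, sub_div, sub_smul]

lemma norm_normDerivSMul_sub_le (z₁ z₂ w₁ w₂ : E) :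
    ‖normDerivSMul z₁ w₁ - normDerivSMul z₂ w₂‖
      ≤ 3 * ‖w₁‖ * ‖z₁ - z₂‖ + ‖z₂‖ * ‖w₁ - w₂‖ := by
  have hsplit : normDerivSMul z₁ w₁ - normDerivSMul z₂ w₂
      = (⟪z₁, w₁⟫ / ‖z₁‖) • (z₁ - z₂) + (⟪z₁, w₁⟫ / ‖z₁‖ - ⟪z₂, w₁⟫ / ‖z₂‖) • z₂
        + normDerivSMul z₂ (w₁ - w₂) := by
    rw [← normDerivSMul_sub_right, normDerivSMul, normDerivSMul, normDerivSMul]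
    module
  rw [hsplit]
  refine (norm_add₃_le).trans ?_
  rw [norm_smul, norm_smul, Real.norm_eq_abs, Real.norm_eq_abs]
  have h₁ := mul_le_mul_of_nonneg_right (abs_inner_div_norm_le z₁ w₁) (norm_nonneg (z₁ - z₂))
  have h₂ := abs_inner_div_norm_sub_mul_le z₁ z₂ w₁
  have h₃ := norm_normDerivSMul_le z₂ (w₁ - w₂)
  linarith

lemma HasDerivAt.norm {f : ℝ → E} {f' : E} {x : ℝ} (hf : HasDerivAt f f' x) (hx : f x ≠ 0) :
    HasDerivAt (fun t => ‖f t‖) (⟪f x, f'⟫ / ‖f x‖) x := by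
  have hsq : ‖f x‖ ^ 2 ≠ 0 := pow_ne_zero 2 (norm_ne_zero_iff.2 hx)
  convert hf.norm_sq.sqrt hsq using 1
  · simp only [Real.sqrt_sq (norm_nonneg _)]
  · rw [Real.sqrt_sq (norm_nonneg _)]
    ring

lemma exists_hasDerivAt_normDerivSMul_of_ne_zero {f g : ℝ → E} {f' g' : E} {x : ℝ}
    (hf : HasDerivAt f f' x) (hg : HasDerivAt g g' x) (hx : f x ≠ 0) :
    ∃ D, HasDerivAt (fun t => normDerivSMul (f t) (g t)) D x ∧
      ‖D‖ ≤ 3 * ‖f'‖ * ‖g x‖ + ‖f x‖ * ‖g'‖ := by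
  set r := ‖f x‖
  set s := ⟪f x, g x⟫ / r
  set a' := ⟪f x, g'⟫ + ⟪f', g x⟫
  set r' := ⟪f x, f'⟫ / r
  have hr : 0 < r := norm_pos_iff.2 hx
  have hs : HasDerivAt (fun t => ⟪f t, g t⟫ / ‖f t‖) ((a' - s * r') / r) x := by
    refine ((hf.inner ℝ hg).fun_div (hf.norm hx) hr.ne').congr_deriv ?_
    simp only [s, r', r]
    field_simp
    ring
  refine ⟨_, hs.smul hf, ?_⟩
  have ha' : |a'| ≤ r * ‖g'‖ + ‖f'‖ * ‖g x‖ :=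
    (abs_add_le _ _).trans (add_le_add (abs_real_inner_le_norm _ _) (abs_real_inner_le_norm _ _))
  have hs_le : |s| ≤ ‖g x‖ := abs_inner_div_norm_le _ _
  have hr'_le : |r'| ≤ ‖f'‖ := abs_inner_div_norm_le _ _
  have hsr' : |s * r'| ≤ ‖g x‖ * ‖f'‖ := by
    rw [abs_mul]; exact mul_le_mul hs_le hr'_le (abs_nonneg _) (norm_nonneg _)
  calc ‖s • f' + ((a' - s * r') / r) • f x‖
      ≤ |a' - s * r'| + |s| * ‖f'‖ := by
        refine (norm_add_le _ _).trans_eq ?_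
        rw [norm_smul, norm_smul, Real.norm_eq_abs, Real.norm_eq_abs, abs_div (a' - s * r'),
          abs_of_pos hr, div_mul_cancel₀ _ hr.ne', add_comm, ← Real.norm_eq_abs]
    _ ≤ 3 * ‖f'‖ * ‖g x‖ + r * ‖g'‖ := by
        linarith [abs_sub a' (s * r'), mul_le_mul_of_nonneg_right hs_le (norm_nonneg f')]

lemma hasDerivAt_normDerivSMul_of_eq_zero {f g : ℝ → E} {x : ℝ}
    (hf : HasDerivAt f 0 x) (hfx : f x = 0) (hg : ContinuousAt g x) :
    HasDerivAt (fun t => normDerivSMul (f t) (g t)) 0 x := by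
  rw [hasDerivAt_iff_isLittleO, hfx, normDerivSMul_zero_left]
  simp only [sub_zero, smul_zero]
  have hfo : f =o[𝓝 x] fun t => t - x := by
    simpa [hfx] using hasDerivAt_iff_isLittleO.1 hf
  have hg1 : g =O[𝓝 x] fun _ => (1 : ℝ) := hg.isBigO_one ℝ
  have hprod := hfo.norm_left.mul_isBigO hg1.norm_left
  simp only [mul_one] at hprod
  refine (isBigO_of_le _ fun t => ?_).trans_isLittleO hprod
  rw [Real.norm_of_nonneg (by positivity)]
  exact norm_normDerivSMul_le _ _

end Pointwise

lemma dist_eq_norm_sub_max_min {F : Type*} [SeminormedAddCommGroup F] (φ : ℝ → F) (a b : ℝ) :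
    dist (φ a) (φ b) = ‖φ (max a b) - φ (min a b)‖ := by
  rcases le_total a b with h | h
  · rw [max_eq_right h, min_eq_left h, dist_eq_norm']
  · rw [max_eq_left h, min_eq_right h, dist_eq_norm]

lemma ACOn.absolutelyContinuousOnInterval {φ : ℝ → ℂ} {c d : ℝ} (h : ACOn φ c d)
    (hcd : c ≤ d) : AbsolutelyContinuousOnInterval φ c d := by
  rw [absolutelyContinuousOnInterval_iff]
  intro ε hε
  obtain ⟨δ, hδ, H⟩ := h ε hε
  refine ⟨δ, hδ, fun ⟨n, I⟩ ⟨hmem, hdisj⟩ hlen => ?_⟩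
  simp only [uIcc_of_le hcd, Finset.mem_range] at hmem
  rw [← Fin.sum_univ_eq_sum_range] at hlen ⊢
  simp only [Real.dist_eq, ← max_sub_min_eq_abs'] at hlen
  simp only [dist_eq_norm_sub_max_min]
  exact H n (fun i => min (I i).1 (I i).2) (fun i => max (I i).1 (I i).2)
    (fun i => ⟨le_min (hmem i i.2).1.1 (hmem i i.2).2.1, min_le_max,
      max_le (hmem i i.2).1.2 (hmem i i.2).2.2⟩)
    (fun i j hij => (hdisj (Finset.mem_coe.2 (Finset.mem_range.2 i.2))
      (Finset.mem_coe.2 (Finset.mem_range.2 j.2)) (Fin.val_injective.ne hij)).mono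
        Ioo_subset_Ioc_self Ioo_subset_Ioc_self)
    hlen

lemma ACOn.of_norm_sub_le {f g h : ℝ → ℂ} {c d A B : ℝ} (hf : ACOn f c d) (hg : ACOn g c d)
    (hA : 0 ≤ A) (hB : 0 ≤ B)
    (hbound : ∀ p ∈ Icc c d, ∀ q ∈ Icc c d, ‖h q - h p‖ ≤ A * ‖f q - f p‖ + B * ‖g q - g p‖) :
    ACOn h c d := by
  intro ε hε
  set ε' := ε / (A + B + 1)
  have hε' : 0 < ε' := by positivity
  obtain ⟨δ₁, hδ₁, H₁⟩ := hf ε' hε'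
  obtain ⟨δ₂, hδ₂, H₂⟩ := hg ε' hε'
  refine ⟨min δ₁ δ₂, lt_min hδ₁ hδ₂, fun m p q hpq hdisj hlen => ?_⟩
  have hf_sum := H₁ m p q hpq hdisj (hlen.trans_le (min_le_left _ _))
  have hg_sum := H₂ m p q hpq hdisj (hlen.trans_le (min_le_right _ _))
  calc ∑ i, ‖h (q i) - h (p i)‖
      ≤ ∑ i, (A * ‖f (q i) - f (p i)‖ + B * ‖g (q i) - g (p i)‖) :=
        Finset.sum_le_sum fun i _ => hbound (p i) ⟨(hpq i).1, (hpq i).2.1.trans (hpq i).2.2⟩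
          (q i) ⟨(hpq i).1.trans (hpq i).2.1, (hpq i).2.2⟩
    _ = A * ∑ i, ‖f (q i) - f (p i)‖ + B * ∑ i, ‖g (q i) - g (p i)‖ := by
        rw [Finset.sum_add_distrib, Finset.mul_sum, Finset.mul_sum]
    _ ≤ A * ε' + B * ε' :=
        add_le_add (mul_le_mul_of_nonneg_left hf_sum.le hA) (mul_le_mul_of_nonneg_left hg_sum.le hB)
    _ < (A + B + 1) * ε' := by linarith
    _ = ε := by simp only [ε']; field_simp

lemma LocACOn.normDerivSMul {f g : ℝ → ℂ} {I : Set ℝ} (hf : LocACOn f I) (hg : LocACOn g I) :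
    LocACOn (fun t => normDerivSMul (f t) (g t)) I := by
  intro c d hcd hsub
  obtain ⟨M, hM⟩ := ((hf c d hcd hsub).absolutelyContinuousOnInterval hcd).exists_bound
  obtain ⟨M', hM'⟩ := ((hg c d hcd hsub).absolutelyContinuousOnInterval hcd).exists_bound
  rw [uIcc_of_le hcd] at hM hM'
  have hc : c ∈ Icc c d := left_mem_Icc.2 hcd
  refine (hf c d hcd hsub).of_norm_sub_le (hg c d hcd hsub)
    (mul_nonneg zero_le_three ((norm_nonneg _).trans (hM' c hc))) ((norm_nonneg _).trans (hM c hc))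
    fun p hp q hq => (norm_normDerivSMul_sub_le _ _ _ _).trans ?_
  gcongr
  exacts [hM' q hq, hM p hp]

lemma LocACOn.locallyBoundedVariationOn {φ : ℝ → ℂ} {I : Set ℝ} (h : LocACOn φ I)
    (hI : I.OrdConnected) : LocallyBoundedVariationOn φ I := fun a b ha hb =>
  ((h _ _ min_le_max (hI.uIcc_subset ha hb)).absolutelyContinuousOnInterval
    min_le_max).boundedVariationOn.mono
      (by rw [uIcc_of_le min_le_max]; exact inter_subset_right.trans Icc_subset_uIcc)

lemma Complex.normDerivSMul_eq (z w : ℂ) :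
    normDerivSMul z w = (w * (starRingEnd ℂ) z + z * (starRingEnd ℂ) w)
      / (2 * ((‖z‖ : ℝ) : ℂ)) * z := by
  have hconj : z * (starRingEnd ℂ) w = (starRingEnd ℂ) (w * (starRingEnd ℂ) z) := by
    rw [map_mul, Complex.conj_conj, mul_comm]
  rw [normDerivSMul, Complex.inner, Complex.real_smul, hconj, Complex.add_conj]
  push_cast
  ring

lemma ae_hasDerivAt_eq_zero_of_apply_eq_zero {F : Type*} [NormedAddCommGroup F] [NormedSpace ℝ F]
    (f : ℝ → F) : ∀ᵐ x, f x = 0 → ∀ f', HasDerivAt f f' x → f' = 0 := by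
  set Z := {x | f x = 0}
  filter_upwards [countable_setOfPred_isolated_right_within (s := Z) |>.ae_notMem volume]
    with x hx hfx f' hf'
  have : (𝓝[Z ∩ Ioi x] x).NeBot := ⟨fun h => hx ⟨hfx, h⟩⟩
  have hslope := (hasDerivWithinAt_iff_tendsto_slope' fun h => lt_irrefl x h.2).1
    (hf'.hasDerivWithinAt (s := Z ∩ Ioi x))
  refine tendsto_nhds_unique hslope (tendsto_const_nhds.congr' ?_)
  filter_upwards [self_mem_nhdsWithin] with y hy
  rw [slope_def_module, hy.1, hfx, sub_zero, smul_zero]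

lemma Convex.ae_restrict_mem_interior {E : Type*} [NormedAddCommGroup E] [NormedSpace ℝ E]
    [MeasurableSpace E] [BorelSpace E] [FiniteDimensional ℝ E] (μ : Measure E)
    [μ.IsAddHaarMeasure] {s : Set E} (hs : Convex ℝ s) :
    ∀ᵐ x ∂μ.restrict s, x ∈ interior s := by
  filter_upwards [ae_restrict_mem₀ (hs.nullMeasurableSet μ),
    ae_restrict_of_ae (measure_eq_zero_iff_ae_notMem.1 (hs.addHaar_frontier μ))] with x hxs hx
  by_contra h
  exact hx ⟨subset_closure hxs, h⟩

lemma ae_exists_hasDerivAt_normDerivSMul {E : Type*} [NormedAddCommGroup E]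
    [InnerProductSpace ℝ E] [FiniteDimensional ℝ E] {I : Set ℝ} (hI : I.OrdConnected)
    {φ φ' : ℝ → E} (hφ' : ∀ x ∈ I, HasDerivWithinAt φ (φ' x) I x)
    (hφ'BV : LocallyBoundedVariationOn φ' I) :
    ∀ᵐ x ∂volume.restrict I, ∃ D2 DW : E, HasDerivAt φ' D2 x ∧
      HasDerivAt (fun t => normDerivSMul (φ t) (φ' t)) DW x ∧
      ‖DW‖ ≤ 3 * ‖φ' x‖ ^ 2 + ‖φ x‖ * ‖D2‖ := by
  filter_upwards [hI.convex.ae_restrict_mem_interior volume,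
    ae_restrict_of_ae hφ'BV.ae_differentiableWithinAt_of_mem,
    ae_restrict_of_ae (ae_hasDerivAt_eq_zero_of_apply_eq_zero φ)] with x hx hdiff hzero
  have hxI : x ∈ I := interior_subset hx
  have hI_nhds : I ∈ 𝓝 x := mem_interior_iff_mem_nhds.1 hx
  have hφx : HasDerivAt φ (φ' x) x := (hφ' x hxI).hasDerivAt hI_nhds
  have hφ'x := ((hdiff hxI).differentiableAt hI_nhds).hasDerivAt
  by_cases h0 : φ x = 0
  · have hv : φ' x = 0 := hzero h0 _ hφx
    refine ⟨_, 0, hφ'x, hasDerivAt_normDerivSMul_of_eq_zero (hv ▸ hφx) h0 hφ'x.continuousAt, ?_⟩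
    rw [norm_zero]
    positivity
  · obtain ⟨DW, hDW, hbound⟩ := exists_hasDerivAt_normDerivSMul_of_ne_zero hφx hφ'x h0
    exact ⟨_, DW, hφ'x, hDW, by rwa [mul_assoc, ← sq] at hbound⟩

/-- for `φ` with `φ, φ'` locally absolutely continuous, the a.e.-defined
function `|φ|'·φ` agrees a.e. with a locally absolutely continuous function whose derivative
is bounded by `3|φ'|² + |φ||φ''|` a.e. -/
theorem statement18 (I : Set ℝ) (hI : I.OrdConnected) (φ φ' : ℝ → ℂ)
    (hφ : LocACOn φ I)
    (hφ' : ∀ x ∈ I, HasDerivWithinAt φ (φ' x) I x)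
    (hφ'AC : LocACOn φ' I) :
    ∃ W : ℝ → ℂ, LocACOn W I ∧
      (∀ᵐ x ∂(volume.restrict I),
        (φ x ≠ 0 → W x =
          ((φ' x * (starRingEnd ℂ) (φ x) + φ x * (starRingEnd ℂ) (φ' x))
            / (2 * ((‖φ x‖ : ℝ) : ℂ))) * φ x) ∧
        (φ x = 0 → W x = 0)) ∧
      (∀ᵐ x ∂(volume.restrict I), ∃ D2 DW : ℂ,
        HasDerivAt φ' D2 x ∧ HasDerivAt W DW x ∧
        ‖DW‖ ≤ 3 * ‖φ' x‖ ^ 2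
          + ‖φ x‖ * ‖D2‖) := by
  refine ⟨fun t => normDerivSMul (φ t) (φ' t), hφ.normDerivSMul hφ'AC,
    Eventually.of_forall fun x => ⟨fun _ => Complex.normDerivSMul_eq _ _, fun h0 => ?_⟩,
    ae_exists_hasDerivAt_normDerivSMul hI hφ' (hφ'AC.locallyBoundedVariationOn hI)⟩
  simp only [h0, normDerivSMul_zero_left]
end
end
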